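/- Let p be a prime and for each positive integer m not divisible by p set S_m = ∑_{k=1}^{p-1} B_k · ((-m)⁻¹)^k ∈ ZMod p. Then for every m with 1 ≤ m ≤ p-2 one has m · S_m = S_1 − S_{m+1} in ZMod p. -/

import Mathlib

/-- The Bell numbers: `bell n` is the number of partitions of an `n`-element set,
determined by `bell 0 = 1` and `bell (n+1) = ∑_{k=0}^{n} C(n,k) * bell k`. -/
def bell : ℕ → ℕ
  | 0 => 1
  | n + 1 => ∑ k ∈ (Finset.range (n + 1)).attach, n.choose k * bell k
decreasing_by exact Finset.mem_range.mp k.2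

/-!
Let `L` be the linear functional on polynomials with `L (X ^ n) = B n`. The Bell recursion says
exactly that `L (X * f) = L (f (X + 1))`; hence `L` is `1` on every falling factorial
`X (X - 1) ⋯ (X - n + 1)`, and since the one of length `p` is `X ^ p - X` over `𝔽_p`,
`B p ≡ 2 (mod p)`.

Over `𝔽_p` write `S m = L (q b)` with `b = -m` and `q b = ∑_{k=1}^{p-1} (X / b) ^ k`, which is
`(X ^ p - X) / (X - b)`. Shifting gives `q b (X + 1) = q (b - 1)`, so
`L (q (b - 1)) = L (X * q b) = L (b * q b + X ^ p - X) = b * L (q b) + 1`, the recursion.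
Finally `q (-1)` is the falling factorial of length `p - 1`, so `S 1 = 1`.
-/

open Polynomial Finset

theorem bell_zero : bell 0 = 1 := by
  rw [bell]

theorem bell_succ (n : ℕ) :
    bell (n + 1) = ∑ k ∈ range (n + 1), n.choose k * bell k := by
  rw [bell]
  exact sum_attach (range (n + 1)) fun k => n.choose k * bell k

theorem bell_one : bell 1 = 1 := by
  rw [bell_succ]
  simp [bell_zero]

section BellFunctional

variable (R : Type*) [CommSemiring R]

noncomputable def bellFunctional : R[X] →ₗ[R] R :=
  lsum fun n => (bell n : R) • LinearMap.id

variable {R}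

theorem bellFunctional_monomial (n : ℕ) (a : R) :
    bellFunctional R (monomial n a) = bell n * a := by
  simp [bellFunctional]

theorem bellFunctional_C_mul (a : R) (f : R[X]) :
    bellFunctional R (C a * f) = a * bellFunctional R f := by
  rw [← smul_eq_C_mul, map_smul, smul_eq_mul]

theorem bellFunctional_X_pow (n : ℕ) : bellFunctional R (X ^ n) = bell n := by
  rw [X_pow_eq_monomial, bellFunctional_monomial, mul_one]

theorem bellFunctional_X : bellFunctional R X = 1 := by
  simpa [bell_one] using bellFunctional_X_pow (R := R) 1

theorem bellFunctional_X_add_one_pow (n : ℕ) :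
    bellFunctional R ((X + 1) ^ n) = bell (n + 1) := by
  rw [add_pow, map_sum, bell_succ]
  push_cast
  refine sum_congr rfl fun k _ => ?_
  rw [one_pow, mul_one, ← C_eq_natCast, mul_comm, bellFunctional_C_mul, bellFunctional_X_pow]

theorem bellFunctional_X_mul (f : R[X]) :
    bellFunctional R (X * f) = bellFunctional R (f.comp (X + 1)) := by
  induction f using Polynomial.induction_on' with
  | add f g hf hg => rw [mul_add, add_comp, map_add, map_add, hf, hg]
  | monomial n a =>
    rw [X_mul_monomial, monomial_comp, bellFunctional_C_mul, bellFunctional_X_add_one_pow,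
      bellFunctional_monomial, mul_comm]

theorem bellFunctional_descPochhammer {R : Type*} [CommRing R] (n : ℕ) :
    bellFunctional R (descPochhammer R n) = 1 := by
  induction n with
  | zero => simpa [bell_zero] using bellFunctional_X_pow (R := R) 0
  | succ n ih =>
    rw [descPochhammer_succ_left, bellFunctional_X_mul, comp_assoc, sub_comp, X_comp, one_comp,
      add_sub_cancel_right, comp_X, ih]

end BellFunctional

section ZModPrime

variable {p : ℕ} [Fact p.Prime]

theorem descPochhammer_zmod_eq_X_pow_sub_X : descPochhammer (ZMod p) p = X ^ p - X := by
  have hp := (Fact.out : p.Prime).one_lt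
  -- both sides are monic of degree `p` and vanish on all of `ZMod p`
  refine sub_eq_zero.mp (eq_zero_of_natDegree_lt_card_of_eval_eq_zero _ (f := id)
    Function.injective_id (fun a => ?_) ?_)
  · rw [id, eval_sub, ← ZMod.natCast_zmod_val a,
      descPochhammer_eval_coe_nat_of_lt (ZMod.val_lt a)]
    simp [ZMod.pow_card]
  · rw [ZMod.card]
    exact IsMonicOfDegree.natDegree_sub_lt (by omega)
      ⟨descPochhammer_natDegree _ p, monic_descPochhammer _ p⟩
      ((isMonicOfDegree_X_pow (R := ZMod p) p).sub (by rw [natDegree_X]; exact hp))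

theorem bell_prime_cast_eq_two : (bell p : ZMod p) = 2 := by
  have h := bellFunctional_descPochhammer (R := ZMod p) p
  rw [descPochhammer_zmod_eq_X_pow_sub_X, map_sub, bellFunctional_X_pow, bellFunctional_X] at h
  linear_combination h

noncomputable def geomPoly (b : ZMod p) : (ZMod p)[X] :=
  ∑ k ∈ Icc 1 (p - 1), C (b⁻¹ ^ k) * X ^ k

theorem X_sub_C_mul_geomPoly {b : ZMod p} (hb : b ≠ 0) : (X - C b) * geomPoly b = X ^ p - X := by
  have hp := (Fact.out : p.Prime).pos
  set x : (ZMod p)[X] := C b⁻¹ * X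
  have hsum : ∑ k ∈ range p, x ^ k = 1 + geomPoly b := by
    have : range p = insert 0 (Icc 1 (p - 1)) := by
      ext k
      simp only [mem_range, mem_insert, mem_Icc]
      omega
    rw [this, sum_insert (by simp), geomPoly, pow_zero]
    simp only [x, mul_pow, C_pow]
  have hgeom := geom_sum_mul x p
  rw [hsum, mul_pow, ← C_pow, ZMod.pow_card] at hgeom
  have hCb : C b * C b⁻¹ = 1 := by rw [← C_mul, mul_inv_cancel₀ hb, C_1]
  linear_combination C b * hgeom - ((1 + geomPoly b) * X - X ^ p) * hCb

theorem geomPoly_comp_X_add_one {b : ZMod p} (hb : b ≠ 0) (hb1 : b - 1 ≠ 0) :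
    (geomPoly b).comp (X + 1) = geomPoly (b - 1) := by
  refine mul_left_cancel₀ (X_sub_C_ne_zero (b - 1)) ?_
  calc (X - C (b - 1)) * (geomPoly b).comp (X + 1) = ((X - C b) * geomPoly b).comp (X + 1) := by
        rw [mul_comp, sub_comp, X_comp, C_comp, C_sub, C_1]; ring
    _ = (X - C (b - 1)) * geomPoly (b - 1) := by
        rw [X_sub_C_mul_geomPoly hb, X_sub_C_mul_geomPoly hb1, sub_comp, pow_comp, X_comp,
          add_pow_char, one_pow]
        ring

theorem bellFunctional_geomPoly (b : ZMod p) :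
    bellFunctional (ZMod p) (geomPoly b) =
      ∑ k ∈ Icc 1 (p - 1), (bell k : ZMod p) * b⁻¹ ^ k := by
  rw [geomPoly, map_sum]
  refine sum_congr rfl fun k _ => ?_
  rw [bellFunctional_C_mul, bellFunctional_X_pow, mul_comm]

theorem bellFunctional_geomPoly_sub_one {b : ZMod p} (hb : b ≠ 0) (hb1 : b - 1 ≠ 0) :
    bellFunctional (ZMod p) (geomPoly (b - 1)) = b * bellFunctional (ZMod p) (geomPoly b) + 1 := by
  have hX : X * geomPoly b = C b * geomPoly b + (X ^ p - X) := by
    linear_combination X_sub_C_mul_geomPoly hb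
  rw [← geomPoly_comp_X_add_one hb hb1, ← bellFunctional_X_mul, hX, map_add,
    bellFunctional_C_mul, map_sub, bellFunctional_X_pow, bellFunctional_X, bell_prime_cast_eq_two]
  ring

theorem geomPoly_neg_one : geomPoly (-1 : ZMod p) = descPochhammer (ZMod p) (p - 1) := by
  have hp := (Fact.out : p.Prime).one_le
  refine mul_left_cancel₀ (X_sub_C_ne_zero (-1 : ZMod p)) ?_
  have hsucc := descPochhammer_succ_right (ZMod p) (p - 1)
  rw [Nat.sub_add_cancel hp, descPochhammer_zmod_eq_X_pow_sub_X, ← C_eq_natCast, Nat.cast_sub hp,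
    ZMod.natCast_self] at hsucc
  rw [X_sub_C_mul_geomPoly (neg_ne_zero.mpr one_ne_zero), hsucc, mul_comm]
  simp

theorem bellFunctional_geomPoly_neg_one :
    bellFunctional (ZMod p) (geomPoly (-1 : ZMod p)) = 1 := by
  rw [geomPoly_neg_one, bellFunctional_descPochhammer]

end ZModPrime

/-- With `S m = ∑_{k=1}^{p-1} B_k ((-m)⁻¹)^k` in `ZMod p`, one has
`m * S m = S 1 - S (m+1)` for `1 ≤ m ≤ p-2`. -/
theorem bell_sum_recursion (p : ℕ) (hp : p.Prime)
    (S : ℕ → ZMod p)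
    (hS : ∀ m : ℕ, 0 < m → ¬ p ∣ m →
      S m = ∑ k ∈ Finset.Icc 1 (p - 1), (bell k : ZMod p) * ((-(m : ZMod p))⁻¹) ^ k)
    (m : ℕ) (hm1 : 1 ≤ m) (hm2 : m ≤ p - 2) :
    (m : ZMod p) * S m = S 1 - S (m + 1) := by
  have : Fact p.Prime := ⟨hp⟩
  have hS' : ∀ n, 0 < n → n < p → S n = bellFunctional (ZMod p) (geomPoly (-(n : ZMod p))) :=
    fun n hn hnp =>
      (hS n hn (Nat.not_dvd_of_pos_of_lt hn hnp)).trans (bellFunctional_geomPoly _).symm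
  have hne : ∀ n, 0 < n → n < p → -(n : ZMod p) ≠ 0 := fun n hn hnp =>
    neg_ne_zero.mpr ((ZMod.natCast_eq_zero_iff n p).not.mpr (Nat.not_dvd_of_pos_of_lt hn hnp))
  have hb : -(m : ZMod p) ≠ 0 := hne m (by omega) (by omega)
  have hb1 : -(m : ZMod p) - 1 ≠ 0 := by
    simpa only [Nat.cast_succ, neg_add'] using hne (m + 1) (by omega) (by omega)
  rw [hS' 1 one_pos hp.one_lt, hS' m (by omega) (by omega), hS' (m + 1) (by omega) (by omega),
    Nat.cast_one, bellFunctional_geomPoly_neg_one, Nat.cast_succ, neg_add',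
    bellFunctional_geomPoly_sub_one hb hb1]
  ring
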